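/- Let (u_k), (v_k), (w_k), (z_k) be nonnegative real random sequences adapted to a filtration (F_k) with E[u_{k+1} | F_k] ≤ (1 + z_k) u_k - v_k + w_k for all k, Σ_k z_k < ∞ a.s., and Σ_k w_k < ∞ a.s. Then u_k converges almost surely to a finite nonnegative random variable, and Σ_k v_k < ∞ almost surely. -/

import Mathlib

/-!
Dividing the recursion by `α (n + 1) = ∏_{j ≤ n} (1 + z j)` (`discount`) shows that
`X n = u n / α n + ∑_{j < n} (v j - w j) / α (j + 1)` (`compensated`) satisfies
`E[X (n + 1) | ℱ n] ≤ X n`; only integrability is missing. Stopping `X` as soon as the partial sums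
of `w` exceed `N` gives an integrable supermartingale bounded below by `-N`, hence a.s. convergent,
and on `{∑ w ≤ N}` it is `X` itself. Since `α n` increases to a finite limit, the convergence of `X`
first bounds `∑ v j / α (j + 1)`, hence `∑ v j`, and then gives the convergence of
`u n = α n (X n - ∑_{j < n} (v j - w j) / α (j + 1))`.
-/

open MeasureTheory Filter Finset Topology

namespace RobbinsSiegmund

section Deterministic

variable {u v w z : ℕ → ℝ}

def discount (z : ℕ → ℝ) (n : ℕ) : ℝ := ∏ j ∈ range n, (1 + z j)

lemma discount_succ (z : ℕ → ℝ) (n : ℕ) : discount z (n + 1) = discount z n * (1 + z n) :=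
  prod_range_succ _ _

lemma one_le_discount (hz : ∀ k, 0 ≤ z k) (n : ℕ) : 1 ≤ discount z n :=
  one_le_prod fun j _ => le_add_of_nonneg_right (hz j)

lemma discount_pos (hz : ∀ k, 0 ≤ z k) (n : ℕ) : 0 < discount z n :=
  one_pos.trans_le (one_le_discount hz n)

lemma monotone_discount (hz : ∀ k, 0 ≤ z k) : Monotone (discount z) :=
  monotone_nat_of_le_succ fun n => by
    rw [discount_succ]
    exact le_mul_of_one_le_right (discount_pos hz n).le (le_add_of_nonneg_right (hz n))

lemma discount_le_exp_tsum (hz : ∀ k, 0 ≤ z k) (hzs : Summable z) (n : ℕ) :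
    discount z n ≤ Real.exp (∑' k, z k) :=
  calc discount z n ≤ ∏ j ∈ range n, Real.exp (z j) :=
        prod_le_prod (fun j _ => by linarith [hz j]) fun j _ => by
          linarith [Real.add_one_le_exp (z j)]
    _ = Real.exp (∑ j ∈ range n, z j) := (Real.exp_sum _ _).symm
    _ ≤ Real.exp (∑' k, z k) := Real.exp_le_exp.2 (hzs.sum_le_tsum _ fun k _ => hz k)

lemma summable_div_discount (hw : ∀ k, 0 ≤ w k) (hz : ∀ k, 0 ≤ z k) (hws : Summable w) :
    Summable fun j => w j / discount z (j + 1) :=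
  hws.of_nonneg_of_le (fun j => div_nonneg (hw j) (discount_pos hz _).le)
    fun j => div_le_self (hw j) (one_le_discount hz _)

lemma div_discount_succ_le (hu : ∀ k, 0 ≤ u k) (hv : ∀ k, 0 ≤ v k) (hw : ∀ k, 0 ≤ w k)
    (hz : ∀ k, 0 ≤ z k) (k : ℕ) :
    ((1 + z k) * u k - v k + w k) / discount z (k + 1) ≤ u k + w k := by
  have h1 := one_le_discount hz k
  have h2 : 0 ≤ (u k + w k) * (1 + z k) * (discount z k - 1) :=
    mul_nonneg (mul_nonneg (add_nonneg (hu k) (hw k)) (by linarith [hz k])) (by linarith)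
  rw [div_le_iff₀ (discount_pos hz _), discount_succ]
  nlinarith [hu k, hv k, hw k, hz k, mul_nonneg (hz k) (hw k)]

noncomputable def compensated (u v w z : ℕ → ℝ) (n : ℕ) : ℝ :=
  u n / discount z n + ∑ j ∈ range n, (v j - w j) / discount z (j + 1)

lemma compensated_succ_sub (hz : ∀ k, 0 ≤ z k) (n : ℕ) :
    compensated u v w z (n + 1) - compensated u v w z n =
      (u (n + 1) - ((1 + z n) * u n - v n + w n)) / discount z (n + 1) := by
  have h1 : 1 + z n ≠ 0 := by linarith [hz n]
  have h2 := (discount_pos hz n).ne'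
  simp only [compensated, sum_range_succ, discount_succ]
  field_simp
  ring

lemma compensated_eq_add_sum (hz : ∀ k, 0 ≤ z k) (n : ℕ) :
    compensated u v w z n = u 0 + ∑ k ∈ range n,
      (u (k + 1) - ((1 + z k) * u k - v k + w k)) / discount z (k + 1) := by
  simp only [← compensated_succ_sub hz, sum_range_sub]
  simp [compensated, discount]

lemma neg_sum_le_compensated (hu : ∀ k, 0 ≤ u k) (hv : ∀ k, 0 ≤ v k) (hw : ∀ k, 0 ≤ w k)
    (hz : ∀ k, 0 ≤ z k) (n : ℕ) : -∑ j ∈ range n, w j ≤ compensated u v w z n := by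
  have hterm : ∀ j ∈ range n, -w j ≤ (v j - w j) / discount z (j + 1) := fun j _ => by
    rw [sub_div]
    linarith [div_nonneg (hv j) (discount_pos hz (j + 1)).le,
      div_le_self (hw j) (one_le_discount hz (j + 1))]
  rw [compensated, ← sum_neg_distrib]
  linarith [sum_le_sum hterm, div_nonneg (hu n) (discount_pos hz n).le]

lemma summable_of_bddAbove_compensated (hu : ∀ k, 0 ≤ u k) (hv : ∀ k, 0 ≤ v k)
    (hw : ∀ k, 0 ≤ w k) (hz : ∀ k, 0 ≤ z k) (hzs : Summable z) (hws : Summable w)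
    (hX : BddAbove (Set.range (compensated u v w z))) : Summable v := by
  obtain ⟨C, hC⟩ := hX
  have hwd := summable_div_discount hw hz hws
  have hvd : Summable fun j => v j / discount z (j + 1) := by
    refine summable_of_sum_range_le (fun j => div_nonneg (hv j) (discount_pos hz _).le)
      (c := C + ∑' j, w j / discount z (j + 1)) fun n => ?_
    have hXn : compensated u v w z n ≤ C := hC (Set.mem_range_self n)
    simp only [compensated, sub_div, sum_sub_distrib] at hXn
    linarith [div_nonneg (hu n) (discount_pos hz n).le,
      hwd.sum_le_tsum (range n) fun j _ => div_nonneg (hw j) (discount_pos hz _).le]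
  refine .of_nonneg_of_le hv (fun j => ?_) (hvd.mul_left (Real.exp (∑' k, z k)))
  rw [mul_div_left_comm]
  exact le_mul_of_one_le_right (hv j)
    ((one_le_div (discount_pos hz _)).2 (discount_le_exp_tsum hz hzs _))

lemma tendsto_of_tendsto_compensated (hu : ∀ k, 0 ≤ u k) (hv : ∀ k, 0 ≤ v k)
    (hw : ∀ k, 0 ≤ w k) (hz : ∀ k, 0 ≤ z k) (hzs : Summable z) (hws : Summable w) {c : ℝ}
    (hX : Tendsto (compensated u v w z) atTop (𝓝 c)) :
    ∃ L, 0 ≤ L ∧ Tendsto u atTop (𝓝 L) := by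
  have hvs := summable_of_bddAbove_compensated hu hv hw hz hzs hws hX.bddAbove_range
  have hd : Summable fun j => (v j - w j) / discount z (j + 1) := by
    simpa only [sub_div] using
      (summable_div_discount hv hz hvs).sub (summable_div_discount hw hz hws)
  have hdiscounted : Tendsto (fun n => u n / discount z n) atTop
      (𝓝 (c - ∑' j, (v j - w j) / discount z (j + 1))) :=
    (hX.sub hd.hasSum.tendsto_sum_nat).congr fun n => by simp [compensated]
  have hdiscount : Tendsto (discount z) atTop (𝓝 (⨆ n, discount z n)) :=
    tendsto_atTop_ciSup (monotone_discount hz)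
      ⟨_, Set.forall_mem_range.2 (discount_le_exp_tsum hz hzs)⟩
  have hu_lim := (hdiscount.mul hdiscounted).congr fun n =>
    mul_div_cancel₀ (u n) (discount_pos hz n).ne'
  exact ⟨_, ge_of_tendsto' hu_lim hu, hu_lim⟩

lemma exists_sum_range_ite_eq {M : Type*} [AddCommMonoid M] {p : ℕ → Prop} [DecidablePred p]
    (hp : Antitone p) (d : ℕ → M) (n : ℕ) :
    ∃ m ≤ n, (∀ k < m, p k) ∧ ∑ k ∈ range n, (if p k then d k else 0) = ∑ k ∈ range m, d k := by
  induction n with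
  | zero => exact ⟨0, le_rfl, by simp, by simp⟩
  | succ n ih =>
    by_cases hn : p n
    · have hall : ∀ k < n + 1, p k := fun k hk => hp (Nat.le_of_lt_succ hk) hn
      exact ⟨n + 1, le_rfl, hall, sum_congr rfl fun k hk => if_pos (hall k (mem_range.1 hk))⟩
    · obtain ⟨m, hmn, hm, hsum⟩ := ih
      exact ⟨m, hmn.trans n.le_succ, hm, by rw [sum_range_succ, if_neg hn, add_zero, hsum]⟩

end Deterministic

section Stochastic

variable {Ω : Type*} {m0 : MeasurableSpace Ω} {μ : Measure Ω} {ℱ : Filtration ℕ m0}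
  {u v w z : ℕ → Ω → ℝ} {N : ℕ} {ω : Ω}

lemma condExp_mul_sub_nonneg [IsFiniteMeasure μ] {m : MeasurableSpace Ω} {ψ f g : Ω → ℝ}
    (hm : m ≤ m0) (hψ : StronglyMeasurable[m] ψ) (hψ0 : 0 ≤ᵐ[μ] ψ)
    (hg : StronglyMeasurable[m] g) (hf : Integrable f μ) (hψf : Integrable (ψ * f) μ)
    (hψg : Integrable (ψ * g) μ) (hfg : μ[f | m] ≤ᵐ[μ] g) :
    0 ≤ᵐ[μ] μ[ψ * (g - f) | m] := by
  rw [mul_sub]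
  filter_upwards [condExp_sub hψg hψf m, condExp_mul_of_stronglyMeasurable_left hψ hψf hf,
    hψ0, hfg] with ω hsub hpull hψω hfgω
  rw [hsub, Pi.sub_apply, condExp_of_stronglyMeasurable hm (hψ.mul hg) hψg, hpull]
  simp only [Pi.mul_apply, Pi.zero_apply, sub_nonneg]
  exact mul_le_mul_of_nonneg_left hfgω hψω

lemma _root_.MeasureTheory.Supermartingale.exists_ae_tendsto_of_ae_const_le [IsFiniteMeasure μ]
    {f : ℕ → Ω → ℝ} (hf : Supermartingale f ℱ μ) {c : ℝ} (hc : ∀ n, ∀ᵐ ω ∂μ, c ≤ f n ω) :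
    ∀ᵐ ω ∂μ, ∃ L, Tendsto (fun n => f n ω) atTop (𝓝 L) := by
  have hL1 (n : ℕ) :
      eLpNorm ((-f) n) 1 μ ≤ (∫ ω, f 0 ω ∂μ + μ.real Set.univ * (2 * |c|)).toNNReal := by
    have habs : ∫ ω, ‖f n ω‖ ∂μ ≤ ∫ ω, f n ω + 2 * |c| ∂μ :=
      integral_mono_ae (hf.integrable n).norm ((hf.integrable n).add (integrable_const _)) <| by
        filter_upwards [hc n] with ω hω
        rw [Real.norm_eq_abs, abs_le]
        constructor <;> linarith [neg_abs_le c, le_abs_self c]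
    rw [integral_add (hf.integrable n) (integrable_const _), integral_const, smul_eq_mul] at habs
    have hmean := hf.setIntegral_le (Nat.zero_le n) MeasurableSet.univ
    rw [setIntegral_univ, setIntegral_univ] at hmean
    rw [Pi.neg_apply, eLpNorm_neg, eLpNorm_one_eq_lintegral_enorm,
      ← ofReal_integral_norm_eq_lintegral_enorm (hf.integrable n)]
    exact ENNReal.ofReal_le_ofReal (by linarith)
  filter_upwards [hf.neg.exists_ae_tendsto_of_bdd hL1] with ω ⟨L, hL⟩
  exact ⟨-L, by simpa using hL.neg⟩

def partialSumsLE (w : ℕ → Ω → ℝ) (N k : ℕ) : Set Ω :=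
  {ω | ∀ i ≤ k + 1, ∑ j ∈ range i, w j ω ≤ N}

lemma antitone_partialSumsLE (w : ℕ → Ω → ℝ) (N : ℕ) : Antitone (partialSumsLE w N) :=
  fun _ _ hkl _ hω i hi => hω i (hi.trans (by omega))

lemma measurableSet_partialSumsLE (hw : Adapted ℱ w) (N k : ℕ) :
    MeasurableSet[ℱ k] (partialSumsLE w N k) := by
  simp only [partialSumsLE, Set.ofPred_forall]
  exact .iInter fun i => .iInter fun hi => measurableSet_le
    (Finset.measurable_sum _ fun j hj => hw.measurable_le (by grind)) measurable_const

lemma le_of_mem_partialSumsLE {k : ℕ} (hw : ∀ j, 0 ≤ w j ω) (h : ω ∈ partialSumsLE w N k) :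
    w k ω ≤ N :=
  (single_le_sum (fun j _ => hw j) (self_mem_range_succ k)).trans (h (k + 1) le_rfl)

lemma sum_range_le_of_forall_mem_partialSumsLE {m : ℕ} (h : ∀ k < m, ω ∈ partialSumsLE w N k) :
    ∑ j ∈ range m, w j ω ≤ N := by
  cases m with
  | zero => simp
  | succ m => exact h m m.lt_succ_self (m + 1) le_rfl

lemma mem_partialSumsLE_of_tsum_le (hw : ∀ j, 0 ≤ w j ω) (hws : Summable (w · ω))
    (hN : ∑' j, w j ω ≤ N) (k : ℕ) : ω ∈ partialSumsLE w N k :=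
  fun _ _ => (hws.sum_le_tsum _ fun j _ => hw j).trans hN

lemma measurable_discount (hz : Adapted ℱ z) {n m : ℕ} (hnm : n ≤ m + 1) :
    Measurable[ℱ m] fun ω => discount (z · ω) n :=
  Finset.measurable_prod _ fun j hj =>
    measurable_const.add (hz.measurable_le (by grind))

noncomputable def stoppedWeight (w z : ℕ → Ω → ℝ) (N k : ℕ) : Ω → ℝ :=
  (partialSumsLE w N k).indicator fun ω => (discount (z · ω) (k + 1))⁻¹

/-- `compensated` stopped once the partial sums of `w` exceed `N`, written through its increments
`(u (k + 1) - r k) / discount z (k + 1)`, where `r k` is the right-hand side of the recursion. -/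
noncomputable def stoppedCompensated (u v w z : ℕ → Ω → ℝ) (N n : ℕ) (ω : Ω) : ℝ :=
  u 0 ω + ∑ k ∈ range n,
    stoppedWeight w z N k ω * (u (k + 1) ω - ((1 + z k ω) * u k ω - v k ω + w k ω))

lemma measurable_stoppedWeight (hw : Adapted ℱ w) (hz : Adapted ℱ z) (N k : ℕ) :
    Measurable[ℱ k] (stoppedWeight w z N k) :=
  (measurable_discount hz le_rfl).inv.indicator (measurableSet_partialSumsLE hw N k)

lemma stoppedWeight_mem_Icc (hz : ∀ k, 0 ≤ z k ω) (N k : ℕ) :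
    stoppedWeight w z N k ω ∈ Set.Icc 0 1 := by
  by_cases h : ω ∈ partialSumsLE w N k
  · rw [stoppedWeight, Set.indicator_of_mem h]
    exact ⟨inv_nonneg.2 (discount_pos hz _).le, inv_le_one_of_one_le₀ (one_le_discount hz _)⟩
  · rw [stoppedWeight, Set.indicator_of_notMem h]
    exact ⟨le_rfl, zero_le_one⟩

lemma adapted_stoppedCompensated (hu : Adapted ℱ u) (hv : Adapted ℱ v) (hw : Adapted ℱ w)
    (hz : Adapted ℱ z) (N : ℕ) : Adapted ℱ (stoppedCompensated u v w z N) := fun n => by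
  refine (hu.measurable_le n.zero_le).add (Finset.measurable_sum _ fun k hk => ?_)
  have hkn : k + 1 ≤ n := mem_range.1 hk
  have hk : k ≤ n := k.le_succ.trans hkn
  have := (measurable_stoppedWeight hw hz N k).mono (ℱ.mono hk) le_rfl
  have := hu.measurable_le hkn
  have := hu.measurable_le hk
  have := hv.measurable_le hk
  have := hw.measurable_le hk
  have := hz.measurable_le hk
  fun_prop

lemma integrable_stoppedWeight_mul (hw : Adapted ℱ w) (hz : Adapted ℱ z)
    (hz0 : ∀ᵐ ω ∂μ, ∀ k, 0 ≤ z k ω) {f : Ω → ℝ} (hf : Integrable f μ) (N k : ℕ) :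
    Integrable (stoppedWeight w z N k * f) μ :=
  hf.bdd_mul ((measurable_stoppedWeight hw hz N k).mono (ℱ.le k) le_rfl).aestronglyMeasurable
    (c := 1) <| by
      filter_upwards [hz0] with ω hω
      obtain ⟨h0, h1⟩ := stoppedWeight_mem_Icc (w := w) hω N k
      rwa [Real.norm_eq_abs, abs_of_nonneg h0]

lemma integrable_stoppedWeight_mul_rhs [IsFiniteMeasure μ] (hu : Adapted ℱ u) (hv : Adapted ℱ v)
    (hw : Adapted ℱ w) (hz : Adapted ℱ z) {N k : ℕ} (hu_int : Integrable (u k) μ)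
    (hu0 : ∀ᵐ ω ∂μ, ∀ k, 0 ≤ u k ω) (hv0 : ∀ᵐ ω ∂μ, ∀ k, 0 ≤ v k ω)
    (hw0 : ∀ᵐ ω ∂μ, ∀ k, 0 ≤ w k ω) (hz0 : ∀ᵐ ω ∂μ, ∀ k, 0 ≤ z k ω)
    (hr : 0 ≤ᵐ[μ] fun ω => (1 + z k ω) * u k ω - v k ω + w k ω) :
    Integrable (stoppedWeight w z N k * fun ω => (1 + z k ω) * u k ω - v k ω + w k ω) μ := by
  have hr_meas : Measurable[ℱ k] fun ω => (1 + z k ω) * u k ω - v k ω + w k ω := by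
    have := hu k; have := hv k; have := hw k; have := hz k
    fun_prop
  have hmeas := (measurable_stoppedWeight hw hz N k).mul hr_meas |>.mono (ℱ.le k) le_rfl
  refine (hu_int.add (integrable_const (N : ℝ))).mono' hmeas.aestronglyMeasurable ?_
  filter_upwards [hu0, hv0, hw0, hz0, hr] with ω hu hv hw hz hrω
  simp only [Pi.mul_apply, Pi.add_apply, Real.norm_eq_abs]
  by_cases h : ω ∈ partialSumsLE w N k
  · rw [stoppedWeight, Set.indicator_of_mem h, inv_mul_eq_div,
      abs_of_nonneg (div_nonneg hrω (discount_pos hz _).le)]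
    linarith [div_discount_succ_le hu hv hw hz k, le_of_mem_partialSumsLE hw h]
  · rw [stoppedWeight, Set.indicator_of_notMem h, zero_mul, abs_zero]
    exact add_nonneg (hu k) N.cast_nonneg

lemma stoppedCompensated_eq_compensated (hz : ∀ k, 0 ≤ z k ω)
    (hmem : ∀ k, ω ∈ partialSumsLE w N k) (n : ℕ) :
    stoppedCompensated u v w z N n ω = compensated (u · ω) (v · ω) (w · ω) (z · ω) n := by
  rw [stoppedCompensated, compensated_eq_add_sum hz]
  congr 1
  refine sum_congr rfl fun k _ => ?_
  rw [stoppedWeight, Set.indicator_of_mem (hmem k), inv_mul_eq_div]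

lemma neg_le_stoppedCompensated (hu : ∀ k, 0 ≤ u k ω) (hv : ∀ k, 0 ≤ v k ω)
    (hw : ∀ k, 0 ≤ w k ω) (hz : ∀ k, 0 ≤ z k ω) (N n : ℕ) :
    -(N : ℝ) ≤ stoppedCompensated u v w z N n ω := by
  classical
  obtain ⟨m, -, hmem, hsum⟩ := exists_sum_range_ite_eq
    (p := fun k => ω ∈ partialSumsLE w N k) (fun _ _ hkl hω => antitone_partialSumsLE w N hkl hω)
    (fun k => (u (k + 1) ω - ((1 + z k ω) * u k ω - v k ω + w k ω)) / discount (z · ω) (k + 1)) n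
  have hstopped : stoppedCompensated u v w z N n ω =
      compensated (u · ω) (v · ω) (w · ω) (z · ω) m := by
    rw [compensated_eq_add_sum hz, ← hsum, stoppedCompensated]
    congr 1
    refine sum_congr rfl fun k _ => ?_
    rw [stoppedWeight, Set.indicator_apply]
    split_ifs <;> simp [inv_mul_eq_div]
  rw [hstopped]
  linarith [neg_sum_le_compensated hu hv hw hz m, sum_range_le_of_forall_mem_partialSumsLE hmem]

lemma supermartingale_stoppedCompensated [IsFiniteMeasure μ] (hu : Adapted ℱ u)
    (hv : Adapted ℱ v) (hw : Adapted ℱ w) (hz : Adapted ℱ z) (hu_int : ∀ k, Integrable (u k) μ)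
    (hu0 : ∀ᵐ ω ∂μ, ∀ k, 0 ≤ u k ω) (hv0 : ∀ᵐ ω ∂μ, ∀ k, 0 ≤ v k ω)
    (hw0 : ∀ᵐ ω ∂μ, ∀ k, 0 ≤ w k ω) (hz0 : ∀ᵐ ω ∂μ, ∀ k, 0 ≤ z k ω)
    (hrec : ∀ k, μ[u (k + 1) | ℱ k] ≤ᵐ[μ] fun ω => (1 + z k ω) * u k ω - v k ω + w k ω)
    (N : ℕ) : Supermartingale (stoppedCompensated u v w z N) ℱ μ := by
  set r : ℕ → Ω → ℝ := fun k ω => (1 + z k ω) * u k ω - v k ω + w k ω with hr_def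
  have hr_nonneg (k : ℕ) : 0 ≤ᵐ[μ] r k :=
    (condExp_nonneg (hu0.mono fun _ h => h (k + 1))).trans (hrec k)
  have hint_u (k : ℕ) := integrable_stoppedWeight_mul hw hz hz0 (hu_int (k + 1)) N k
  have hint_r (k : ℕ) := integrable_stoppedWeight_mul_rhs (N := N) hu hv hw hz (hu_int k)
    hu0 hv0 hw0 hz0 (hr_nonneg k)
  have hint (n : ℕ) : Integrable (stoppedCompensated u v w z N n) μ :=
    (hu_int 0).add (integrable_finsetSum _ fun k _ =>
      ((hint_u k).sub (hint_r k)).congr (.of_forall fun ω => (mul_sub _ _ _).symm))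
  have hdecr (n : ℕ) : stoppedCompensated u v w z N n - stoppedCompensated u v w z N (n + 1) =
      stoppedWeight w z N n * (r n - u (n + 1)) := by
    funext ω
    simp only [stoppedCompensated, sum_range_succ, Pi.sub_apply, Pi.mul_apply, hr_def]
    ring
  refine supermartingale_of_condExp_sub_nonneg_nat
    (adapted_stoppedCompensated hu hv hw hz N).stronglyAdapted hint fun n => ?_
  have hr_meas : Measurable[ℱ n] (r n) := by
    have := hu n; have := hv n; have := hw n; have := hz n
    fun_prop
  rw [hdecr]
  refine condExp_mul_sub_nonneg (ℱ.le n) (measurable_stoppedWeight hw hz N n).stronglyMeasurable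
    ?_ hr_meas.stronglyMeasurable (hu_int _) (hint_u n) (hint_r n) (hrec n)
  filter_upwards [hz0] with ω hω using (stoppedWeight_mem_Icc hω N n).1

end Stochastic

end RobbinsSiegmund

open RobbinsSiegmund in
/-- Robbins–Siegmund almost-supermartingale convergence theorem: if nonnegative adapted
sequences satisfy `E[u_{k+1} | F_k] ≤ (1 + z_k) u_k - v_k + w_k` with `Σ z_k < ∞` and
`Σ w_k < ∞` a.s., then `u_k` converges a.s. to a finite nonnegative limit and
`Σ v_k < ∞` a.s. -/
theorem robbins_siegmund {Ω : Type*} {m0 : MeasurableSpace Ω} {μ : Measure Ω}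
    [IsProbabilityMeasure μ] (ℱ : Filtration ℕ m0)
    (u v w z : ℕ → Ω → ℝ)
    (hu_adapted : Adapted ℱ u) (hv_adapted : Adapted ℱ v)
    (hw_adapted : Adapted ℱ w) (hz_adapted : Adapted ℱ z)
    (hu_int : ∀ k, Integrable (u k) μ)
    (hu_nonneg : ∀ k, 0 ≤ᵐ[μ] u k) (hv_nonneg : ∀ k, 0 ≤ᵐ[μ] v k)
    (hw_nonneg : ∀ k, 0 ≤ᵐ[μ] w k) (hz_nonneg : ∀ k, 0 ≤ᵐ[μ] z k)
    (hrec : ∀ k, μ[u (k + 1) | ℱ k] ≤ᵐ[μ]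
      fun ω => (1 + z k ω) * u k ω - v k ω + w k ω)
    (hz_sum : ∀ᵐ ω ∂μ, Summable (fun k => z k ω))
    (hw_sum : ∀ᵐ ω ∂μ, Summable (fun k => w k ω)) :
    ∀ᵐ ω ∂μ, (∃ L : ℝ, 0 ≤ L ∧ Tendsto (fun k => u k ω) atTop (nhds L)) ∧
      Summable (fun k => v k ω) := by
  have hu0 := ae_all_iff.2 hu_nonneg
  have hv0 := ae_all_iff.2 hv_nonneg
  have hw0 := ae_all_iff.2 hw_nonneg
  have hz0 := ae_all_iff.2 hz_nonneg
  have hstopped : ∀ᵐ ω ∂μ, ∀ N : ℕ,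
      ∃ c, Tendsto (fun n => stoppedCompensated u v w z N n ω) atTop (𝓝 c) :=
    ae_all_iff.2 fun N => (supermartingale_stoppedCompensated hu_adapted hv_adapted hw_adapted
      hz_adapted hu_int hu0 hv0 hw0 hz0 hrec N).exists_ae_tendsto_of_ae_const_le fun n => by
        filter_upwards [hu0, hv0, hw0, hz0] with ω hu hv hw hz
        exact neg_le_stoppedCompensated hu hv hw hz N n
  filter_upwards [hu0, hv0, hw0, hz0, hz_sum, hw_sum, hstopped] with ω hu hv hw hz hzs hws hconv
  obtain ⟨N, hN⟩ := exists_nat_ge (∑' k, w k ω)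
  obtain ⟨c, hc⟩ := hconv N
  have hX : Tendsto (compensated (u · ω) (v · ω) (w · ω) (z · ω)) atTop (𝓝 c) :=
    hc.congr (stoppedCompensated_eq_compensated hz (mem_partialSumsLE_of_tsum_le hw hws hN))
  exact ⟨tendsto_of_tendsto_compensated hu hv hw hz hzs hws hX,
    summable_of_bddAbove_compensated hu hv hw hz hzs hws hX.bddAbove_range⟩
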